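/- Let m be a nonzero integer, let k ≥ 1 be odd, and let γ = -T^m ∈ SL(2,ℤ). Then Q_k(γ) = coker(1 - γ^k) is a finite group of cardinality 4 (so equal to its torsion submodule), and c_k(-T^m) = 4. -/
import Mathlib


/-- `Q_k(γ) = coker(1 - γ^k)`, the cokernel of `1 - γ^k` acting on `Fin 2 → ℤ`. -/
abbrev Qk (γ : Matrix.SpecialLinearGroup (Fin 2) ℤ) (k : ℕ) :=
  (Fin 2 → ℤ) ⧸ LinearMap.range (Matrix.toLin'
    (1 - ((γ ^ k : Matrix.SpecialLinearGroup (Fin 2) ℤ) : Matrix (Fin 2) (Fin 2) ℤ)))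

/-- The shear matrix `T = [[1,1],[0,1]]` as an element of `SL(2,ℤ)`. -/
def T : Matrix.SpecialLinearGroup (Fin 2) ℤ :=
  ⟨!![1, 1; 0, 1], by norm_num [Matrix.det_fin_two_of]⟩

lemma mem_range_iff' (c : ℤ) (v : Fin 2 → ℤ) :
    v ∈ LinearMap.range (Matrix.toLin' !![2,c;0,2]) ↔
      ∃ a b : ℤ, v 0 = 2*a + c*b ∧ v 1 = 2*b := by
  constructor
  · rintro ⟨w, rfl⟩
    exact ⟨w 0, w 1, by simp [Matrix.toLin'_apply, Matrix.mulVec, dotProduct,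
      Fin.sum_univ_two, mul_comm], by simp [Matrix.toLin'_apply, Matrix.mulVec,
      dotProduct, Fin.sum_univ_two]⟩
  · rintro ⟨a, b, h0, h1⟩
    refine ⟨![a, b], ?_⟩
    funext i
    fin_cases i <;> simp [Matrix.toLin'_apply, Matrix.mulVec, dotProduct,
      Fin.sum_univ_two, h0, h1, mul_comm]

lemma card_coker' (c : ℤ) :
    Nat.card ((Fin 2 → ℤ) ⧸ LinearMap.range (Matrix.toLin' !![2,c;0,2])) = 4 := by
  rcases Int.even_or_odd c with ⟨d, hd⟩ | ⟨d, hd⟩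
  · -- even case: quotient ≃ ZMod 2 × ZMod 2
    let f : (Fin 2 → ℤ) →ₗ[ℤ] ZMod 2 × ZMod 2 :=
      { toFun := fun v => (((v 0 + d * v 1 : ℤ) : ZMod 2), ((v 1 : ℤ) : ZMod 2))
        map_add' := by intro x y; simp; push_cast; ring
        map_smul' := by intro r x; simp [Prod.smul_def, zsmul_eq_mul]; push_cast; ring }
    have hsurj : Function.Surjective f := by
      rintro ⟨a, b⟩
      refine ⟨![(a.val : ℤ) - d * (b.val : ℤ), (b.val : ℤ)], ?_⟩
      simp only [f, LinearMap.coe_mk, AddHom.coe_mk]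
      ext <;> simp [ZMod.natCast_val, ZMod.intCast_cast, ZMod.cast_id] <;> push_cast <;>
        simp [ZMod.natCast_val, ZMod.cast_id]
    have hker : LinearMap.ker f = LinearMap.range (Matrix.toLin' !![2,c;0,2]) := by
      ext v
      rw [LinearMap.mem_ker, mem_range_iff']
      constructor
      · intro h
        have h1 : ((v 0 + d * v 1 : ℤ) : ZMod 2) = 0 := congrArg Prod.fst h
        have h2 : ((v 1 : ℤ) : ZMod 2) = 0 := congrArg Prod.snd h
        rw [ZMod.intCast_zmod_eq_zero_iff_dvd] at h1 h2
        obtain ⟨b, hb⟩ := h2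
        obtain ⟨s, hs⟩ := h1
        refine ⟨s - 2 * d * b, b, ?_, hb⟩
        rw [hb] at hs
        push_cast at hs ⊢
        rw [hd]; linarith
      · rintro ⟨a, b, h0, h1⟩
        have : (f v).1 = 0 ∧ (f v).2 = 0 := by
          simp only [f, LinearMap.coe_mk, AddHom.coe_mk, h0, h1, hd]
          constructor <;> [skip; rw [ZMod.intCast_zmod_eq_zero_iff_dvd]]
          · rw [ZMod.intCast_zmod_eq_zero_iff_dvd]
            exact ⟨a + d * b + d * b, by ring⟩
          · exact ⟨b, rfl⟩
        exact Prod.ext this.1 this.2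
    have e := (Submodule.quotEquivOfEq _ _ hker.symm).trans
      (LinearMap.quotKerEquivOfSurjective f hsurj)
    rw [Nat.card_congr e.toEquiv]
    simp [Nat.card_prod, Nat.card_zmod]
  · -- odd case: quotient ≃ ZMod 4
    let f : (Fin 2 → ℤ) →ₗ[ℤ] ZMod 4 :=
      { toFun := fun v => ((2 * v 0 - c * v 1 : ℤ) : ZMod 4)
        map_add' := by intro x y; simp; push_cast; ring
        map_smul' := by intro r x; simp [zsmul_eq_mul]; push_cast; ring }
    have hcsq : ((c * c : ℤ) : ZMod 4) = 1 := by
      rw [hd]; push_cast; ring_nf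
      have : ((4 : ℤ) : ZMod 4) = 0 := by decide
      calc (1 : ZMod 4) + (d:ZMod 4)*4 + (d:ZMod 4)^2*4
          = 1 + ((d:ZMod 4) + (d:ZMod 4)^2) * ((4:ℤ) : ZMod 4) := by push_cast; ring
        _ = 1 := by rw [this]; ring
    have hsurj : Function.Surjective f := by
      intro z
      refine ⟨![0, -(c * (z.val : ℤ))], ?_⟩
      simp only [f, LinearMap.coe_mk, AddHom.coe_mk]
      have : ((2 * (![0, -(c * (z.val:ℤ))] 0) - c * (![0, -(c * (z.val:ℤ))] 1) : ℤ) : ZMod 4)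
          = ((c*c : ℤ) : ZMod 4) * ((z.val : ℤ) : ZMod 4) := by
        push_cast
        simp
        ring
      rw [this, hcsq, one_mul]
      simp [ZMod.intCast_cast, ZMod.natCast_val, ZMod.cast_id]
    have hker : LinearMap.ker f = LinearMap.range (Matrix.toLin' !![2,c;0,2]) := by
      ext v
      rw [LinearMap.mem_ker, mem_range_iff']
      constructor
      · intro h
        simp only [f, LinearMap.coe_mk, AddHom.coe_mk] at h
        have h1 : ((4:ℕ):ℤ) ∣ 2 * v 0 - c * v 1 :=
          (ZMod.intCast_zmod_eq_zero_iff_dvd _ 4).mp h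
        norm_num at h1
        obtain ⟨t, ht⟩ := h1
        have hv1 : Even (c * v 1) := ⟨v 0 - 2*t, by linarith⟩
        have hv1' : Even (v 1) := by
          rcases Int.even_or_odd (v 1) with h | h
          · exact h
          · exfalso
            have hoc : Odd c := ⟨d, hd⟩
            exact (Int.not_odd_iff_even.mpr hv1) (hoc.mul h)
        obtain ⟨b, hb⟩ := hv1'
        refine ⟨t, b, ?_, by rw [hb]; ring⟩
        rw [hb] at ht
        linarith
      · rintro ⟨a, b, h0, h1⟩
        simp only [f, LinearMap.coe_mk, AddHom.coe_mk, h0, h1]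
        rw [ZMod.intCast_zmod_eq_zero_iff_dvd]
        exact ⟨a, by ring⟩
    have e := (Submodule.quotEquivOfEq _ _ hker.symm).trans
      (LinearMap.quotKerEquivOfSurjective f hsurj)
    rw [Nat.card_congr e.toEquiv]
    simp [Nat.card_zmod]

lemma hT_eq' : T = ModularGroup.T := Subtype.ext rfl

lemma gamma_coe' (m : ℤ) :
    ((-(T ^ m) : Matrix.SpecialLinearGroup (Fin 2) ℤ) : Matrix (Fin 2) (Fin 2) ℤ)
      = !![-1, -m; 0, -1] := by
  rw [Matrix.SpecialLinearGroup.coe_neg, hT_eq', ModularGroup.coe_T_zpow]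
  ext i j
  fin_cases i <;> fin_cases j <;> simp

lemma one_sub_pow' (m : ℤ) (k : ℕ) (hko : Odd k) :
    (1 - (((-(T ^ m)) ^ k : Matrix.SpecialLinearGroup (Fin 2) ℤ) : Matrix (Fin 2) (Fin 2) ℤ))
      = !![2, m * (k : ℤ); 0, 2] := by
  have h1 : (((-(T ^ m)) ^ k : Matrix.SpecialLinearGroup (Fin 2) ℤ) : Matrix (Fin 2) (Fin 2) ℤ)
      = -(!![1, m * (k : ℤ); 0, 1]) := by
    calc (((-(T ^ m)) ^ k : Matrix.SpecialLinearGroup (Fin 2) ℤ) : Matrix (Fin 2) (Fin 2) ℤ)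
        = ((-(T ^ m) : Matrix.SpecialLinearGroup (Fin 2) ℤ) : Matrix (Fin 2) (Fin 2) ℤ) ^ k :=
          Matrix.SpecialLinearGroup.coe_pow _ _
      _ = (-(((T ^ m) : Matrix.SpecialLinearGroup (Fin 2) ℤ) : Matrix (Fin 2) (Fin 2) ℤ)) ^ k := by
          rw [Matrix.SpecialLinearGroup.coe_neg]
      _ = -((((T ^ m) : Matrix.SpecialLinearGroup (Fin 2) ℤ) : Matrix (Fin 2) (Fin 2) ℤ) ^ k) :=
          hko.neg_pow _
      _ = -((((T ^ m) ^ (k : ℤ) : Matrix.SpecialLinearGroup (Fin 2) ℤ) :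
            Matrix (Fin 2) (Fin 2) ℤ)) := by
          rw [zpow_natCast, Matrix.SpecialLinearGroup.coe_pow]
      _ = -(((T ^ (m * (k : ℤ)) : Matrix.SpecialLinearGroup (Fin 2) ℤ) :
            Matrix (Fin 2) (Fin 2) ℤ)) := by rw [← zpow_mul]
      _ = -(!![1, m * (k : ℤ); 0, 1]) := by rw [hT_eq', ModularGroup.coe_T_zpow]
  rw [h1, sub_neg_eq_add]
  ext i j
  fin_cases i <;> fin_cases j <;> simp [Matrix.one_fin_two]

lemma torsion_eq_top' (M : Type*) [AddCommGroup M] [Module ℤ M] [Finite M] :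
    Submodule.torsion ℤ M = ⊤ := by
  rw [eq_top_iff]
  intro x _
  have hc : (Nat.card M : ℤ) ≠ 0 := by
    exact_mod_cast Nat.card_ne_zero.mpr ⟨⟨x⟩, ‹Finite M›⟩
  refine ⟨⟨(Nat.card M : ℤ), mem_nonZeroDivisors_of_ne_zero hc⟩, ?_⟩
  have h4 : (Nat.card M) • x = 0 := card_nsmul_eq_zero'
  rw [← Nat.cast_smul_eq_nsmul ℤ] at h4
  exact h4

/-- for `γ = -T^m` with `m ≠ 0` and `k ≥ 1` odd, `Q_k(γ)` is a finite group
of cardinality `4`, equal to its torsion submodule, and `c_k(-T^m) = 4`. -/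
theorem stmt11 (m : ℤ) (hm : m ≠ 0) (k : ℕ) (hk : 1 ≤ k) (hko : Odd k)
    (g : Module.End ℤ (Qk (-(T ^ m)) k))
    (hg : ∀ v : Fin 2 → ℤ, g (Submodule.Quotient.mk v) =
      Submodule.Quotient.mk (Matrix.mulVec
        (((-(T ^ m) : Matrix.SpecialLinearGroup (Fin 2) ℤ)) : Matrix (Fin 2) (Fin 2) ℤ) v)) :
    Finite (Qk (-(T ^ m)) k) ∧
    Nat.card (Qk (-(T ^ m)) k) = 4 ∧
    Submodule.torsion ℤ (Qk (-(T ^ m)) k) = ⊤ ∧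
    Nat.card (Quot fun x y : Submodule.torsion ℤ (Qk (-(T ^ m)) k) =>
        ∃ j : ℕ, (g ^ j) (x : Qk (-(T ^ m)) k) = (y : Qk (-(T ^ m)) k)) = 4 := by
  have hmat := one_sub_pow' m k hko
  have hcard : Nat.card (Qk (-(T ^ m)) k) = 4 := by
    unfold Qk
    rw [hmat]
    exact card_coker' _
  have hfin : Finite (Qk (-(T ^ m)) k) :=
    Nat.finite_of_card_ne_zero (by rw [hcard]; norm_num)
  have htor : Submodule.torsion ℤ (Qk (-(T ^ m)) k) = ⊤ := torsion_eq_top' _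
  have hgid : ∀ x : Qk (-(T ^ m)) k, g x = x := by
    intro x
    obtain ⟨v, rfl⟩ := Submodule.Quotient.mk_surjective _ x
    rw [hg, Submodule.Quotient.eq, hmat, gamma_coe', mem_range_iff']
    obtain ⟨t, ht⟩ := hko
    refine ⟨-(v 0) + m * t * (v 1), -(v 1), ?_, ?_⟩ <;>
      simp [Matrix.mulVec, dotProduct, Fin.sum_univ_two, ht] <;> push_cast <;> ring
  have hgj : ∀ (j : ℕ) (x : Qk (-(T ^ m)) k), (g ^ j) x = x := by
    intro j
    induction j with
    | zero => intro x; simp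
    | succ n ih => intro x; rw [pow_succ, Module.End.mul_apply, hgid, ih]
  have hrel : (fun x y : Submodule.torsion ℤ (Qk (-(T ^ m)) k) =>
      ∃ j : ℕ, (g ^ j) (x : Qk (-(T ^ m)) k) = (y : Qk (-(T ^ m)) k)) = Eq := by
    funext x y
    apply propext
    constructor
    · rintro ⟨j, hj⟩
      exact Subtype.ext ((hgj j x).symm.trans hj)
    · rintro rfl
      exact ⟨0, by simp⟩
  refine ⟨hfin, hcard, htor, ?_⟩
  rw [hrel]
  have e : Quot (@Eq ↥(Submodule.torsion ℤ (Qk (-(T ^ m)) k))) ≃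
      ↥(Submodule.torsion ℤ (Qk (-(T ^ m)) k)) := by
    refine ⟨Quot.lift id fun a b h => h, Quot.mk _, ?_, fun a => rfl⟩
    intro q
    induction q using Quot.ind
    rfl
  rw [Nat.card_congr e, htor, Nat.card_congr (Submodule.topEquiv (R := ℤ)
    (M := Qk (-(T ^ m)) k)).toEquiv, hcard]
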